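/- arXiv:2008.09002 — 2 statements merged into one kernel-verified Lean document; each statement's English description precedes it below -/
import Mathlib

section
/- Let T be a tree with at least three vertices, maximum degree at most 4, and no vertex of degree 2. If T has no splitter, then T is a 4-caterpillar, i.e., the non-leaf vertices of T form the vertex set of a path in T (and each has degree 3 or 4). -/
open SimpleGraph

namespace TurnRegular

/-- Degree of a vertex: the cardinality of its neighbor set. -/
noncomputable def deg {V : Type*} (G : SimpleGraph V) (v : V) : ℕ :=
  (G.neighborSet v).ncard

/-- A splitter: a vertex adjacent to at least three non-leaf vertices. -/
def IsSplitter {V : Type*} (G : SimpleGraph V) (v : V) : Prop :=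
  3 ≤ {u | G.Adj v u ∧ 2 ≤ deg G u}.ncard

/-- A `k`-fork: a vertex of degree exactly `k+1` adjacent to at least `k` leaves. -/
def IsKFork {V : Type*} (k : ℕ) (G : SimpleGraph V) (v : V) : Prop :=
  deg G v = k + 1 ∧ k ≤ {u | G.Adj v u ∧ deg G u = 1}.ncard

/-- A `k`-caterpillar: a tree with at least three vertices whose non-leaf vertices
form the vertex set of a path, every non-leaf vertex having degree between `3` and `k`. -/
def IsKCaterpillar (k : ℕ) {W : Type*} (G : SimpleGraph W) : Prop :=
  G.IsTree ∧ 3 ≤ Nat.card W ∧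
  (∃ (a b : W) (p : G.Walk a b), p.IsPath ∧ ∀ v, 2 ≤ deg G v ↔ v ∈ p.support) ∧
  (∀ v, 2 ≤ deg G v → 3 ≤ deg G v ∧ deg G v ≤ k)

/-- The vertex set of the connected component of `G - v` containing `u`
(for `u ≠ v`): all vertices reachable from `u` by a walk avoiding `v`. -/
def compAway {V : Type*} (G : SimpleGraph V) (v u : V) : Set V :=
  {w | ∃ p : G.Walk u w, v ∉ p.support}

/-- Vertex set of the branch of `G` at `v` through the component of `G - v`
containing `u`. -/
def branchVerts {V : Type*} (G : SimpleGraph V) (v u : V) : Set V :=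
  insert v (compAway G v u)

/-- The branch of `G` at `v` through the component of `G - v` containing `u`:
the subgraph induced on `{v} ∪ C`. -/
def branch {V : Type*} (G : SimpleGraph V) (v u : V) :
    SimpleGraph (branchVerts G v u) :=
  G.induce (branchVerts G v u)

/-- A 4-windmill: a tree of maximum degree at most 4 with exactly one splitter `v`,
such that `v` has degree 4 and each of the four branches at `v` is a 3-caterpillar. -/
def Is4Windmill {V : Type*} (G : SimpleGraph V) : Prop :=
  G.IsTree ∧ (∀ w, deg G w ≤ 4) ∧
  ∃ v, (∀ w, IsSplitter G w ↔ w = v) ∧ deg G v = 4 ∧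
    ∀ u, G.Adj v u → IsKCaterpillar 3 (branch G v u)

/-- A 3-windmill: a tree of maximum degree at most 4 with exactly one splitter `v`,
such that `v` has exactly three non-leaf neighbors, every other neighbor of `v`
is a leaf, and among the three branches at `v` through the components containing
the non-leaf neighbors, two are 3-caterpillars and one is a 4-caterpillar. -/
def Is3Windmill {V : Type*} (G : SimpleGraph V) : Prop :=
  G.IsTree ∧ (∀ w, deg G w ≤ 4) ∧
  ∃ v, (∀ w, IsSplitter G w ↔ w = v) ∧
    ∃ u₁ u₂ u₃, u₁ ≠ u₂ ∧ u₁ ≠ u₃ ∧ u₂ ≠ u₃ ∧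
      G.Adj v u₁ ∧ G.Adj v u₂ ∧ G.Adj v u₃ ∧
      2 ≤ deg G u₁ ∧ 2 ≤ deg G u₂ ∧ 2 ≤ deg G u₃ ∧
      (∀ u, G.Adj v u → 2 ≤ deg G u → u = u₁ ∨ u = u₂ ∨ u = u₃) ∧
      (∀ u, G.Adj v u → u ≠ u₁ → u ≠ u₂ → u ≠ u₃ → deg G u = 1) ∧
      IsKCaterpillar 3 (branch G v u₁) ∧ IsKCaterpillar 3 (branch G v u₂) ∧
      IsKCaterpillar 4 (branch G v u₃)

/-- A double-windmill: a tree of maximum degree at most 4 with exactly two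
splitters `u` and `v` such that (i) every vertex strictly between `u` and `v`
on the `u`–`v` path is adjacent, apart from its neighbors on the path, only
to leaves; (ii) each of `u` and `v` has exactly three non-leaf neighbors and
every other neighbor is a leaf; (iii) for each of `u` and `v`, the two branches
at it through the components that contain one of its non-leaf neighbors but not
the other splitter are 3-caterpillars. -/
def IsDoubleWindmill {V : Type*} (G : SimpleGraph V) : Prop :=
  G.IsTree ∧ (∀ w, deg G w ≤ 4) ∧
  ∃ u v, u ≠ v ∧ (∀ w, IsSplitter G w ↔ (w = u ∨ w = v)) ∧
    (∀ p : G.Walk u v, p.IsPath →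
      ∀ w ∈ p.support, w ≠ u → w ≠ v →
        ∀ x, G.Adj w x → x ∉ p.support → deg G x = 1) ∧
    {x | G.Adj u x ∧ 2 ≤ deg G x}.ncard = 3 ∧
    {x | G.Adj v x ∧ 2 ≤ deg G x}.ncard = 3 ∧
    (∀ x, G.Adj u x → deg G x = 1 ∨ 2 ≤ deg G x) ∧
    (∀ x, G.Adj v x → deg G x = 1 ∨ 2 ≤ deg G x) ∧
    (∀ x, G.Adj u x → 2 ≤ deg G x → v ∉ branchVerts G u x →
      IsKCaterpillar 3 (branch G u x)) ∧
    (∀ x, G.Adj v x → 2 ≤ deg G x → u ∉ branchVerts G v x →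
      IsKCaterpillar 3 (branch G v x))

/-- The closed axis-parallel ray starting at `p` and passing through `q`
(extended to infinity beyond `q`). -/
def ray (p q : ℝ × ℝ) : Set (ℝ × ℝ) :=
  {x | ∃ t : ℝ, 0 ≤ t ∧ x = p + t • (q - p)}

/-- A rectilinear planar drawing of `G`: an injective placement of the vertices
in the plane such that each edge is a horizontal or vertical segment, and the
segments of two distinct edges meet at most in the image of a common endpoint. -/
def IsRectDrawing {V : Type*} (G : SimpleGraph V) (Γ : V → ℝ × ℝ) : Prop :=
  Function.Injective Γ ∧
  (∀ u v, G.Adj u v → (Γ u).1 = (Γ v).1 ∨ (Γ u).2 = (Γ v).2) ∧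
  (∀ u v x y, G.Adj u v → G.Adj x y → s(u, v) ≠ s(x, y) →
    ∀ p ∈ segment ℝ (Γ u) (Γ v) ∩ segment ℝ (Γ x) (Γ y),
      ∃ w, (w = u ∨ w = v) ∧ (w = x ∨ w = y) ∧ p = Γ w)

/-- The drawn point set of edge `{a, b}` in the drawing `Γ`: its segment, where
the edge is extended beyond each leaf endpoint to an infinite axis-parallel ray. -/
noncomputable def edgeDrawn {V : Type*} (G : SimpleGraph V) (Γ : V → ℝ × ℝ)
    (a b : V) : Set (ℝ × ℝ) :=
  (if deg G b = 1 then ray (Γ a) (Γ b) else segment ℝ (Γ a) (Γ b)) ∪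
  (if deg G a = 1 then ray (Γ b) (Γ a) else segment ℝ (Γ a) (Γ b))

/-- A convex rectilinear planar drawing: a rectilinear planar drawing in which,
after extending every edge incident to a leaf beyond that leaf to an infinite
axis-parallel ray, the resulting point sets of two distinct edges still meet at
most in the image of a common endpoint. -/
def IsConvexRectDrawing {V : Type*} (G : SimpleGraph V) (Γ : V → ℝ × ℝ) : Prop :=
  IsRectDrawing G Γ ∧
  (∀ u v x y, G.Adj u v → G.Adj x y → s(u, v) ≠ s(x, y) →
    ∀ p ∈ edgeDrawn G Γ u v ∩ edgeDrawn G Γ x y,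
      ∃ w, (w = u ∨ w = v) ∧ (w = x ∨ w = y) ∧ p = Γ w)

/-- `G` admits a convex rectilinear planar drawing. -/
def HasConvexDrawing {V : Type*} (G : SimpleGraph V) : Prop :=
  ∃ Γ : V → ℝ × ℝ, IsConvexRectDrawing G Γ

end TurnRegular

/-!
Let `a`, `b` be non-leaves at maximum distance and `p` the path between them. Every vertex of a
path between two non-leaves is a non-leaf, so the non-leaves on `p` are exactly its vertices.
A non-leaf `v` off `p` is joined to `p` by a path whose last edge `y x` enters `p` from a
non-leaf `y`. If `x` were an end of `p`, then `y` would be farther from the other end than `a`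
is from `b`; so `x` is an inner vertex, and its two neighbours on `p` together with `y` make it a
splitter.
-/

namespace SimpleGraph

variable {V : Type*} {G : SimpleGraph V}

lemma Walk.IsPath.exists_adj_adj_of_mem_support {u v w : V} {p : G.Walk u v} (hp : p.IsPath)
    (hw : w ∈ p.support) (hwu : w ≠ u) (hwv : w ≠ v) :
    ∃ x y, x ≠ y ∧ G.Adj w x ∧ G.Adj w y ∧ x ∈ p.support ∧ y ∈ p.support := by
  obtain ⟨i, rfl, hi⟩ := Walk.mem_support_iff_exists_getVert.mp hw
  have hpos : 0 < i := Nat.pos_of_ne_zero (by rintro rfl; exact hwu p.getVert_zero)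
  have hlt : i < p.length := lt_of_le_of_ne hi (by rintro rfl; exact hwv p.getVert_length)
  have hprev : G.Adj (p.getVert (i - 1)) (p.getVert i) := by
    simpa [Nat.sub_add_cancel hpos] using p.adj_getVert_succ (i := i - 1) (by omega)
  refine ⟨p.getVert (i - 1), p.getVert (i + 1), fun h => ?_, hprev.symm, p.adj_getVert_succ hlt,
    p.getVert_mem_support _, p.getVert_mem_support _⟩
  have := hp.getVert_injOn (by simp; omega) (by simp; omega) h
  omega

lemma IsAcyclic.length_eq_dist (hG : G.IsAcyclic) {u v : V} {p : G.Walk u v} (hp : p.IsPath) :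
    p.length = G.dist u v := by
  obtain ⟨q, hq, hlen⟩ := p.reachable.exists_path_of_dist
  have hpq : (⟨p, hp⟩ : G.Path u v) = ⟨q, hq⟩ := (hG.subsingleton_path u v).elim _ _
  rw [← hlen, show p = q from congrArg Subtype.val hpq]

lemma IsAcyclic.dist_eq_dist_add_one_of_adj_of_notMem_support (hG : G.IsAcyclic) {a b y : V}
    {p : G.Walk a b} (hp : p.IsPath) (hya : G.Adj y a) (hy : y ∉ p.support) :
    G.dist y b = G.dist a b + 1 := by
  rw [← hG.length_eq_dist hp, ← hG.length_eq_dist (p := Walk.cons hya p) (hp.cons hy),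
    Walk.length_cons]

lemma exists_farthest_pair [Finite V] (P : V → Prop) (h : ∃ v, P v) :
    ∃ a b, P a ∧ P b ∧ ∀ c d, P c → P d → G.dist c d ≤ G.dist a b := by
  obtain ⟨v, hv⟩ := h
  have : Nonempty {q : V × V // P q.1 ∧ P q.2} := ⟨⟨(v, v), hv, hv⟩⟩
  obtain ⟨⟨⟨a, b⟩, ha, hb⟩, hmax⟩ :=
    Finite.exists_max fun q : {q : V × V // P q.1 ∧ P q.2} => G.dist q.1.1 q.1.2
  exact ⟨a, b, ha, hb, fun c d hc hd => hmax ⟨(c, d), hc, hd⟩⟩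

end SimpleGraph

namespace TurnRegular

section

variable {V : Type*} {G : SimpleGraph V}

lemma deg_eq_degree [Fintype V] [DecidableRel G.Adj] (v : V) : deg G v = G.degree v := by
  rw [deg, ← Nat.card_coe_set_eq, Nat.card_eq_fintype_card, card_neighborSet_eq_degree]

lemma two_le_deg_of_adj [Finite V] {v x y : V} (hxy : x ≠ y) (hx : G.Adj v x)
    (hy : G.Adj v y) : 2 ≤ deg G v :=
  (Set.one_lt_ncard (Set.toFinite _)).mpr ⟨x, hx, y, hy, hxy⟩

lemma isSplitter_of_adj [Finite V] {v x y z : V} (hxy : x ≠ y) (hxz : x ≠ z) (hyz : y ≠ z)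
    (hx : G.Adj v x) (hy : G.Adj v y) (hz : G.Adj v z)
    (hx₂ : 2 ≤ deg G x) (hy₂ : 2 ≤ deg G y) (hz₂ : 2 ≤ deg G z) : IsSplitter G v :=
  (Set.two_lt_ncard (Set.toFinite _)).mpr
    ⟨x, ⟨hx, hx₂⟩, y, ⟨hy, hy₂⟩, z, ⟨hz, hz₂⟩, hxy, hxz, hyz⟩

lemma two_le_deg_of_mem_support [Finite V] {a b v : V} {p : G.Walk a b} (hp : p.IsPath)
    (hv : v ∈ p.support) (ha : 2 ≤ deg G a) (hb : 2 ≤ deg G b) : 2 ≤ deg G v := by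
  by_cases hva : v = a
  · exact hva ▸ ha
  by_cases hvb : v = b
  · exact hvb ▸ hb
  obtain ⟨x, y, hxy, hx, hy, -, -⟩ := hp.exists_adj_adj_of_mem_support hv hva hvb
  exact two_le_deg_of_adj hxy hx hy

lemma exists_two_le_deg_of_isTree [Fintype V] (hG : G.IsTree) (hcard : 3 ≤ Nat.card V) :
    ∃ v, 2 ≤ deg G v := by
  classical
  by_contra! h
  have hsum : ∑ v, G.degree v ≤ Fintype.card V :=
    calc ∑ v, G.degree v ≤ ∑ _v : V, 1 :=
          Finset.sum_le_sum fun v _ => by have := h v; rw [deg_eq_degree] at this; omega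
      _ = Fintype.card V := by simp
  have hedges := hG.card_edgeFinset
  rw [sum_degrees_eq_twice_card_edges] at hsum
  rw [Nat.card_eq_fintype_card] at hcard
  omega

lemma mem_support_of_farthest [Finite V] (hG : G.IsTree) (hsplit : ∀ v, ¬ IsSplitter G v)
    {a b : V} (ha : 2 ≤ deg G a) (hb : 2 ≤ deg G b)
    (hmax : ∀ c d, 2 ≤ deg G c → 2 ≤ deg G d → G.dist c d ≤ G.dist a b)
    {p : G.Walk a b} (hp : p.IsPath) {v : V} (hv : 2 ≤ deg G v) : v ∈ p.support := by
  by_contra hvp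
  obtain ⟨q, hq, -⟩ := hG.connected.exists_path_of_dist v a
  obtain ⟨⟨⟨y, x⟩, hyx⟩, hd, hy, hx⟩ :=
    q.exists_boundary_dart {z | z ∉ p.support} hvp (by simp)
  replace hyx : G.Adj y x := hyx
  replace hy : y ∉ p.support := hy
  replace hx : x ∈ p.support := not_not.mp hx
  have hy₂ : 2 ≤ deg G y :=
    two_le_deg_of_mem_support hq (q.dart_fst_mem_support_of_mem_darts hd) hv ha
  by_cases hxa : x = a
  · subst hxa
    have hfar := hG.isAcyclic.dist_eq_dist_add_one_of_adj_of_notMem_support hp hyx hy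
    have hle := hmax y b hy₂ hb
    omega
  by_cases hxb : x = b
  · subst hxb
    have hfar := hG.isAcyclic.dist_eq_dist_add_one_of_adj_of_notMem_support hp.reverse hyx
      (by simpa using hy)
    have hle := hmax y a hy₂ ha
    rw [dist_comm (u := x)] at hfar
    omega
  obtain ⟨n₁, n₂, hn, h₁, h₂, hn₁, hn₂⟩ := hp.exists_adj_adj_of_mem_support hx hxa hxb
  exact hsplit x <| isSplitter_of_adj hn (ne_of_mem_of_not_mem hn₁ hy)
    (ne_of_mem_of_not_mem hn₂ hy) h₁ h₂ hyx.symm (two_le_deg_of_mem_support hp hn₁ ha hb)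
    (two_le_deg_of_mem_support hp hn₂ ha hb) hy₂

end

/-- Let `T` be a tree with at least three vertices, maximum degree at most 4, and
no vertex of degree 2. If `T` has no splitter, then `T` is a 4-caterpillar, i.e.,
its non-leaf vertices form the vertex set of a path (each having degree 3 or 4). -/
theorem stmt3 {V : Type*} [Fintype V] (G : SimpleGraph V)
    (htree : G.IsTree) (hcard : 3 ≤ Nat.card V)
    (hdeg : ∀ v, deg G v ≤ 4) (hno2 : ∀ v, deg G v ≠ 2)
    (hsplit : ∀ v, ¬ IsSplitter G v) :
    IsKCaterpillar 4 G := by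
  obtain ⟨a, b, ha, hb, hmax⟩ := exists_farthest_pair (G := G) (fun v => 2 ≤ deg G v)
    (exists_two_le_deg_of_isTree htree hcard)
  obtain ⟨p, hp, -⟩ := htree.connected.exists_path_of_dist a b
  have hnonleaf (v : V) : 2 ≤ deg G v ↔ v ∈ p.support :=
    ⟨fun hv => mem_support_of_farthest htree hsplit ha hb hmax hp hv,
      fun hv => two_le_deg_of_mem_support hp hv ha hb⟩
  exact ⟨htree, hcard, ⟨a, b, p, hp, hnonleaf⟩,
    fun v hv => ⟨lt_of_le_of_ne hv (hno2 v).symm, hdeg v⟩⟩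

end TurnRegular
end

section
/- Every 4-caterpillar admits a convex rectilinear planar drawing. -/
open SimpleGraph

namespace TurnRegular

/-! Draw the spine of the caterpillar on the `x`-axis, its `i`-th vertex at `(i, 0)`, and every
leaf one unit away from its neighbour: up, down, or, at the two ends of the spine only, outward
along the axis. A spine vertex has at most four neighbours, so its leaves can be given distinct
directions among those its spine edges leave free. Extending leaf edges to rays then produces
vertical rays over distinct spine vertices (or opposite ones over the same vertex) and at most
two horizontal rays pointing away from the ends of the spine, so two drawn edges can only meet
at a common spine vertex. -/

inductive Dir
  | up | down | left | right
  deriving DecidableEq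

namespace Dir

instance : Fintype Dir := ⟨{up, down, left, right}, fun d => by cases d <;> simp⟩

def vec : Dir → ℝ × ℝ
  | up => (0, 1)
  | down => (0, -1)
  | left => (-1, 0)
  | right => (1, 0)

lemma vec_fst_eq_zero_or_vec_snd_eq_zero (d : Dir) : d.vec.1 = 0 ∨ d.vec.2 = 0 := by
  cases d <;> simp [vec]

lemma vec_injective : Function.Injective vec := by
  intro d d' h
  cases d <;> cases d' <;> simp_all [vec, Prod.ext_iff] <;> norm_num at h

lemma eq_zero_of_smul_vec_eq {d d' : Dir} (hd : d ≠ d') {t t' : ℝ} (ht : 0 ≤ t)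
    (ht' : 0 ≤ t') (h : t • d.vec = t' • d'.vec) : t = 0 := by
  cases d <;> cases d' <;> simp_all [vec, Prod.ext_iff] <;> linarith

lemma natCard_eq_four : Nat.card Dir = 4 := by
  rw [Nat.card_eq_fintype_card]
  rfl

end Dir

/-- The directions in which a leaf of the `i`-th vertex of a spine `0, …, n` may be drawn: the
horizontal ones are taken by the spine edges, except outward at the two ends. -/
def allowedDirs (n i : ℕ) : Set Dir :=
  {d | (d = .left → i = 0) ∧ (d = .right → i = n)}

lemma notMem_allowedDirs {n i : ℕ} {d : Dir} :
    d ∉ allowedDirs n i ↔ d = .left ∧ i ≠ 0 ∨ d = .right ∧ i ≠ n := by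
  cases d <;> simp [allowedDirs]

lemma eq_of_add_smul_vec_eq {n i j : ℕ} {d d' : Dir} {t t' : ℝ} (hi : i ≤ n) (hj : j ≤ n)
    (hd : d ∈ allowedDirs n i) (hd' : d' ∈ allowedDirs n j) (ht : 0 ≤ t) (ht' : 0 ≤ t')
    (h : ((i : ℝ), (0 : ℝ)) + t • d.vec = ((j : ℝ), 0) + t' • d'.vec) : i = j := by
  have hi' : (i : ℝ) ≤ n := by exact_mod_cast hi
  have hj' : (j : ℝ) ≤ n := by exact_mod_cast hj
  have hi0 : (0 : ℝ) ≤ i := i.cast_nonneg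
  have hj0 : (0 : ℝ) ≤ j := j.cast_nonneg
  have hdl : d = .left → (i : ℝ) = 0 := fun h => by simp [hd.1 h]
  have hdr : d = .right → (i : ℝ) = n := fun h => by simp [hd.2 h]
  have hdl' : d' = .left → (j : ℝ) = 0 := fun h => by simp [hd'.1 h]
  have hdr' : d' = .right → (j : ℝ) = n := fun h => by simp [hd'.2 h]
  have h1 := congrArg Prod.fst h
  have h2 := congrArg Prod.snd h
  simp only [Prod.fst_add, Prod.snd_add, Prod.smul_fst, Prod.smul_snd, smul_eq_mul] at h1 h2
  have : (i : ℝ) = j := by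
    cases d <;> cases d' <;> simp only [Dir.vec, reduceCtorEq, forall_const,
      IsEmpty.forall_iff] at h1 h2 hdl hdr hdl' hdr' <;> linarith
  exact_mod_cast this

lemma eq_succ_of_add_smul_right_eq {k k' : ℕ} {s s' : ℝ} (hk : k < k') (hs : s ≤ 1)
    (hs' : 0 ≤ s')
    (h : ((k : ℝ), (0 : ℝ)) + s • Dir.right.vec = ((k' : ℝ), 0) + s' • Dir.right.vec) :
    k' = k + 1 ∧ s' = 0 := by
  have hk' : (k : ℝ) + 1 ≤ k' := by exact_mod_cast hk
  simp only [Dir.vec, Prod.ext_iff, Prod.fst_add, Prod.smul_fst, smul_eq_mul] at h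
  have hs'0 : s' = 0 := by linarith [h.1]
  refine ⟨?_, hs'0⟩
  have : (k' : ℝ) = k + 1 := by linarith [h.1]
  exact_mod_cast this

lemma eq_zero_of_add_smul_right_eq_add_smul_vec {n k i : ℕ} {d : Dir} {s t : ℝ} (hk : k < n)
    (hd : d ∈ allowedDirs n i) (hs : s ∈ Set.Icc (0 : ℝ) 1) (ht : 0 ≤ t)
    (h : ((k : ℝ), (0 : ℝ)) + s • Dir.right.vec = ((i : ℝ), 0) + t • d.vec) :
    t = 0 ∧ (i = k ∨ i = k + 1) := by
  have hk' : (k : ℝ) + 1 ≤ n := by exact_mod_cast hk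
  obtain ⟨hs0, hs1⟩ := hs
  have ht0 : t = 0 := by
    cases d <;> simp_all [allowedDirs, Dir.vec, Prod.ext_iff] <;> linarith
  refine ⟨ht0, ?_⟩
  have h1 := congrArg Prod.fst h
  simp only [ht0, Dir.vec, zero_smul, add_zero, Prod.fst_add, Prod.smul_fst, smul_eq_mul,
    mul_one] at h1
  have hki : k ≤ i := by exact_mod_cast (show (k : ℝ) ≤ i by linarith)
  have hik : i ≤ k + 1 := by exact_mod_cast (show (i : ℝ) ≤ k + 1 by linarith)
  omega

lemma add_vec_ne {n i j : ℕ} {d : Dir} (hd : d ∈ allowedDirs n i) (hj : j ≤ n) :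
    ((i : ℝ), (0 : ℝ)) + d.vec ≠ ((j : ℝ), 0) := by
  have hj' : (j : ℝ) ≤ n := by exact_mod_cast hj
  have hj0 : (0 : ℝ) ≤ j := j.cast_nonneg
  cases d <;> simp [allowedDirs, Dir.vec, Prod.ext_iff] at hd ⊢ <;> subst_vars <;> push_cast <;>
    intro h <;> linarith

section EdgeDrawn

variable {V : Type*} (G : SimpleGraph V) (Γ : V → ℝ × ℝ)

lemma segment_subset_ray (x y : ℝ × ℝ) : segment ℝ x y ⊆ ray x y := by
  rw [segment_eq_image']
  rintro _ ⟨t, ht, rfl⟩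
  exact ⟨t, ht.1, rfl⟩

lemma edgeDrawn_comm (a b : V) : edgeDrawn G Γ a b = edgeDrawn G Γ b a := by
  unfold edgeDrawn
  rw [Set.union_comm]
  congr 1 <;> split_ifs <;> simp only [segment_symm]

lemma segment_subset_edgeDrawn (a b : V) : segment ℝ (Γ a) (Γ b) ⊆ edgeDrawn G Γ a b := by
  refine Set.subset_union_of_subset_left ?_ _
  split_ifs
  · exact segment_subset_ray _ _
  · exact subset_rfl

variable {G} {a b : V}

lemma edgeDrawn_eq_segment (ha : deg G a ≠ 1) (hb : deg G b ≠ 1) :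
    edgeDrawn G Γ a b = segment ℝ (Γ a) (Γ b) := by
  rw [edgeDrawn, if_neg hb, if_neg ha, Set.union_self]

lemma edgeDrawn_subset_ray (ha : deg G a ≠ 1) : edgeDrawn G Γ a b ⊆ ray (Γ a) (Γ b) := by
  unfold edgeDrawn
  rw [if_neg ha]
  split_ifs
  · exact Set.union_subset subset_rfl (segment_subset_ray _ _)
  · exact Set.union_subset (segment_subset_ray _ _) (segment_subset_ray _ _)

end EdgeDrawn

/-- A placement of a caterpillar along its spine `S`: `pos v` is the index of `v` on the spine,
or for a leaf the index of its neighbour, and a leaf is drawn one unit from its neighbour in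
direction `dir v`. -/
structure IsCaterpillarLayout {V : Type*} (G : SimpleGraph V) (n : ℕ) (S : Set V)
    (pos : V → ℕ) (dir : V → Dir) : Prop where
  deg_ne_one : ∀ v ∈ S, deg G v ≠ 1
  deg_eq_one : ∀ v ∉ S, deg G v = 1
  mem_of_adj_of_notMem : ∀ u ∉ S, ∀ v, G.Adj u v → v ∈ S
  pos_le : ∀ v, pos v ≤ n
  pos_injOn : Set.InjOn pos S
  pos_of_adj : ∀ u ∈ S, ∀ v ∈ S, G.Adj u v → pos v = pos u + 1 ∨ pos u = pos v + 1
  pos_of_adj_leaf : ∀ u ∈ S, ∀ v ∉ S, G.Adj u v → pos v = pos u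
  dir_mem : ∀ v ∉ S, dir v ∈ allowedDirs n (pos v)
  dir_injOn : ∀ u ∉ S, ∀ v ∉ S, pos u = pos v → dir u = dir v → u = v

open Classical in
noncomputable def layoutDrawing {V : Type*} (S : Set V) (pos : V → ℕ) (dir : V → Dir)
    (v : V) : ℝ × ℝ :=
  ((pos v : ℝ), 0) + if v ∈ S then 0 else (dir v).vec

namespace IsCaterpillarLayout

variable {V : Type*} {G : SimpleGraph V} {n : ℕ} {S : Set V} {pos : V → ℕ} {dir : V → Dir}
  {u v x y : V} {q : ℝ × ℝ}

local notation "Γ" => layoutDrawing S pos dir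

lemma layoutDrawing_of_mem (hv : v ∈ S) : Γ v = ((pos v : ℝ), 0) := by
  simp [layoutDrawing, hv]

lemma layoutDrawing_of_notMem (hv : v ∉ S) : Γ v = ((pos v : ℝ), 0) + (dir v).vec := by
  simp [layoutDrawing, hv]

variable (S pos G) in
def IsOrientedEdge (u v : V) : Prop :=
  (u ∈ S ∧ v ∈ S ∧ pos v = pos u + 1) ∨ (u ∈ S ∧ v ∉ S ∧ G.Adj u v)

variable (hL : IsCaterpillarLayout G n S pos dir)
include hL

lemma isOrientedEdge_or (h : G.Adj u v) :
    IsOrientedEdge G S pos u v ∨ IsOrientedEdge G S pos v u := by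
  by_cases hu : u ∈ S <;> by_cases hv : v ∈ S
  · rcases hL.pos_of_adj u hu v hv h with huv | huv
    · exact .inl (.inl ⟨hu, hv, huv⟩)
    · exact .inr (.inl ⟨hv, hu, huv⟩)
  · exact .inl (.inr ⟨hu, hv, h⟩)
  · exact .inr (.inr ⟨hv, hu, h.symm⟩)
  · exact absurd (hL.mem_of_adj_of_notMem u hu v h) hv

lemma exists_of_mem_edgeDrawn_spine (hu : u ∈ S) (hv : v ∈ S) (huv : pos v = pos u + 1)
    (hq : q ∈ edgeDrawn G Γ u v) :
    ∃ s ∈ Set.Icc (0 : ℝ) 1, q = ((pos u : ℝ), 0) + s • Dir.right.vec := by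
  rw [edgeDrawn_eq_segment _ (hL.deg_ne_one u hu) (hL.deg_ne_one v hv), segment_eq_image'] at hq
  obtain ⟨s, hs, rfl⟩ := hq
  refine ⟨s, hs, ?_⟩
  rw [layoutDrawing_of_mem hu, layoutDrawing_of_mem hv, huv]
  simp [Dir.vec]

lemma exists_of_mem_edgeDrawn_leaf (hu : u ∈ S) (hv : v ∉ S) (huv : G.Adj u v)
    (hq : q ∈ edgeDrawn G Γ u v) :
    ∃ t : ℝ, 0 ≤ t ∧ q = ((pos u : ℝ), 0) + t • (dir v).vec := by
  obtain ⟨t, ht, rfl⟩ := edgeDrawn_subset_ray _ (hL.deg_ne_one u hu) hq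
  refine ⟨t, ht, ?_⟩
  rw [layoutDrawing_of_mem hu, layoutDrawing_of_notMem hv, hL.pos_of_adj_leaf u hu v hv huv,
    add_sub_cancel_left]

lemma common_end_spine_spine (hu : u ∈ S) (hv : v ∈ S) (huv : pos v = pos u + 1)
    (hx : x ∈ S) (hy : y ∈ S) (hxy : pos y = pos x + 1) (hne : s(u, v) ≠ s(x, y))
    (hq : q ∈ edgeDrawn G Γ u v ∩ edgeDrawn G Γ x y) :
    ∃ w, (w = u ∨ w = v) ∧ (w = x ∨ w = y) ∧ q = Γ w := by
  obtain ⟨s, hs, rfl⟩ := hL.exists_of_mem_edgeDrawn_spine hu hv huv hq.1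
  obtain ⟨s', hs', hq'⟩ := hL.exists_of_mem_edgeDrawn_spine hx hy hxy hq.2
  rcases lt_trichotomy (pos u) (pos x) with hux | hux | hux
  · obtain ⟨hxu, rfl⟩ := eq_succ_of_add_smul_right_eq hux hs.2 hs'.1 hq'
    have hxv : x = v := hL.pos_injOn hx hv (hxu.trans huv.symm)
    refine ⟨x, .inr hxv, .inl rfl, ?_⟩
    rw [hq', layoutDrawing_of_mem hx, zero_smul, add_zero]
  · have hxu : x = u := hL.pos_injOn hx hu hux.symm
    subst hxu
    have hyv : y = v := hL.pos_injOn hy hv (hxy.trans huv.symm)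
    exact absurd (by rw [hyv]) hne
  · obtain ⟨hux', rfl⟩ := eq_succ_of_add_smul_right_eq hux hs'.2 hs.1 hq'.symm
    have huy : u = y := hL.pos_injOn hu hy (hux'.trans hxy.symm)
    refine ⟨u, .inl rfl, .inr huy, ?_⟩
    rw [layoutDrawing_of_mem hu, zero_smul, add_zero]

lemma common_end_spine_leaf (hu : u ∈ S) (hv : v ∈ S) (huv : pos v = pos u + 1)
    (hx : x ∈ S) (hy : y ∉ S) (hxy : G.Adj x y)
    (hq : q ∈ edgeDrawn G Γ u v ∩ edgeDrawn G Γ x y) :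
    ∃ w, (w = u ∨ w = v) ∧ (w = x ∨ w = y) ∧ q = Γ w := by
  obtain ⟨s, hs, rfl⟩ := hL.exists_of_mem_edgeDrawn_spine hu hv huv hq.1
  obtain ⟨t, ht, hq'⟩ := hL.exists_of_mem_edgeDrawn_leaf hx hy hxy hq.2
  have hdir := hL.dir_mem y hy
  rw [hL.pos_of_adj_leaf x hx y hy hxy] at hdir
  have hun : pos u < n := by have := hL.pos_le v; omega
  obtain ⟨rfl, hxu⟩ := eq_zero_of_add_smul_right_eq_add_smul_vec hun hdir hs ht hq'
  refine ⟨x, ?_, .inl rfl, ?_⟩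
  · rcases hxu with hxu | hxu
    · exact .inl (hL.pos_injOn hx hu hxu)
    · exact .inr (hL.pos_injOn hx hv (hxu.trans huv.symm))
  · rw [hq', layoutDrawing_of_mem hx, zero_smul, add_zero]

lemma common_end_leaf_leaf (hu : u ∈ S) (hv : v ∉ S) (huv : G.Adj u v)
    (hx : x ∈ S) (hy : y ∉ S) (hxy : G.Adj x y) (hne : s(u, v) ≠ s(x, y))
    (hq : q ∈ edgeDrawn G Γ u v ∩ edgeDrawn G Γ x y) :
    ∃ w, (w = u ∨ w = v) ∧ (w = x ∨ w = y) ∧ q = Γ w := by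
  obtain ⟨t, ht, rfl⟩ := hL.exists_of_mem_edgeDrawn_leaf hu hv huv hq.1
  obtain ⟨t', ht', hq'⟩ := hL.exists_of_mem_edgeDrawn_leaf hx hy hxy hq.2
  have hpv := hL.pos_of_adj_leaf u hu v hv huv
  have hpy := hL.pos_of_adj_leaf x hx y hy hxy
  have hux : pos u = pos x := eq_of_add_smul_vec_eq (hL.pos_le u) (hL.pos_le x)
    (hpv ▸ hL.dir_mem v hv) (hpy ▸ hL.dir_mem y hy) ht ht' hq'
  have hxu : x = u := hL.pos_injOn hx hu hux.symm
  subst hxu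
  have hvy : dir v ≠ dir y := fun h =>
    hne (by rw [hL.dir_injOn v hv y hy (hpv.trans hpy.symm) h])
  rw [add_right_inj] at hq'
  refine ⟨x, .inl rfl, .inl rfl, ?_⟩
  rw [Dir.eq_zero_of_smul_vec_eq hvy ht ht' hq', zero_smul, add_zero, layoutDrawing_of_mem hx]

lemma common_end_of_isOrientedEdge (huv : IsOrientedEdge G S pos u v)
    (hxy : IsOrientedEdge G S pos x y) (hne : s(u, v) ≠ s(x, y))
    (hq : q ∈ edgeDrawn G Γ u v ∩ edgeDrawn G Γ x y) :
    ∃ w, (w = u ∨ w = v) ∧ (w = x ∨ w = y) ∧ q = Γ w := by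
  rcases huv with ⟨hu, hv, huv⟩ | ⟨hu, hv, huv⟩ <;>
    rcases hxy with ⟨hx, hy, hxy⟩ | ⟨hx, hy, hxy⟩
  · exact hL.common_end_spine_spine hu hv huv hx hy hxy hne hq
  · exact hL.common_end_spine_leaf hu hv huv hx hy hxy hq
  · obtain ⟨w, hw₁, hw₂, hw⟩ :=
      hL.common_end_spine_leaf hx hy hxy hu hv huv ⟨hq.2, hq.1⟩
    exact ⟨w, hw₂, hw₁, hw⟩
  · exact hL.common_end_leaf_leaf hu hv huv hx hy hxy hne hq

lemma common_end (huv : G.Adj u v) (hxy : G.Adj x y) (hne : s(u, v) ≠ s(x, y))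
    (hq : q ∈ edgeDrawn G Γ u v ∩ edgeDrawn G Γ x y) :
    ∃ w, (w = u ∨ w = v) ∧ (w = x ∨ w = y) ∧ q = Γ w := by
  rcases hL.isOrientedEdge_or huv with huv | huv <;>
    rcases hL.isOrientedEdge_or hxy with hxy | hxy
  · exact hL.common_end_of_isOrientedEdge huv hxy hne hq
  · rw [edgeDrawn_comm G Γ x y] at hq
    obtain ⟨w, hw₁, hw₂, hw⟩ :=
      hL.common_end_of_isOrientedEdge huv hxy (by rwa [Sym2.eq_swap (a := y)]) hq
    exact ⟨w, hw₁, hw₂.symm, hw⟩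
  · rw [edgeDrawn_comm G Γ u v] at hq
    obtain ⟨w, hw₁, hw₂, hw⟩ :=
      hL.common_end_of_isOrientedEdge huv hxy (by rwa [Sym2.eq_swap (a := v)]) hq
    exact ⟨w, hw₁.symm, hw₂, hw⟩
  · rw [edgeDrawn_comm G Γ u v, edgeDrawn_comm G Γ x y] at hq
    obtain ⟨w, hw₁, hw₂, hw⟩ := hL.common_end_of_isOrientedEdge huv hxy
      (by rwa [Sym2.eq_swap (a := v), Sym2.eq_swap (a := y)]) hq
    exact ⟨w, hw₁.symm, hw₂.symm, hw⟩

lemma layoutDrawing_injective : Function.Injective Γ := by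
  intro u v huv
  by_cases hu : u ∈ S <;> by_cases hv : v ∈ S
  · rw [layoutDrawing_of_mem hu, layoutDrawing_of_mem hv] at huv
    exact hL.pos_injOn hu hv (by simpa using huv)
  · rw [layoutDrawing_of_mem hu, layoutDrawing_of_notMem hv] at huv
    exact absurd huv.symm (add_vec_ne (hL.dir_mem v hv) (hL.pos_le u))
  · rw [layoutDrawing_of_notMem hu, layoutDrawing_of_mem hv] at huv
    exact absurd huv (add_vec_ne (hL.dir_mem u hu) (hL.pos_le v))
  · rw [layoutDrawing_of_notMem hu, layoutDrawing_of_notMem hv] at huv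
    have hpos : pos u = pos v := eq_of_add_smul_vec_eq (hL.pos_le u) (hL.pos_le v)
      (hL.dir_mem u hu) (hL.dir_mem v hv) zero_le_one zero_le_one (by simpa using huv)
    rw [hpos, add_right_inj] at huv
    exact hL.dir_injOn u hu v hv hpos (Dir.vec_injective huv)

lemma axisParallel_of_isOrientedEdge (huv : IsOrientedEdge G S pos u v) :
    (Γ u).1 = (Γ v).1 ∨ (Γ u).2 = (Γ v).2 := by
  rcases huv with ⟨hu, hv, -⟩ | ⟨hu, hv, huv⟩
  · right
    rw [layoutDrawing_of_mem hu, layoutDrawing_of_mem hv]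
  · rw [layoutDrawing_of_mem hu, layoutDrawing_of_notMem hv, hL.pos_of_adj_leaf u hu v hv huv]
    rcases (dir v).vec_fst_eq_zero_or_vec_snd_eq_zero with h | h
    · left; simp [h]
    · right; simp [h]

theorem isConvexRectDrawing : IsConvexRectDrawing G Γ := by
  refine ⟨⟨hL.layoutDrawing_injective, fun u v huv => ?_, ?_⟩, ?_⟩
  · rcases hL.isOrientedEdge_or huv with h | h
    · exact hL.axisParallel_of_isOrientedEdge h
    · exact (hL.axisParallel_of_isOrientedEdge h).imp Eq.symm Eq.symm
  · exact fun u v x y huv hxy hne q hq => hL.common_end huv hxy hne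
      ⟨segment_subset_edgeDrawn G Γ u v hq.1, segment_subset_edgeDrawn G Γ x y hq.2⟩
  · exact fun u v x y huv hxy hne q hq => hL.common_end huv hxy hne hq

end IsCaterpillarLayout

lemma exists_injOn_fibers {α β γ : Type*} [Finite α] [Nonempty γ] (s : Set α)
    (f : α → β) (A : β → Set γ) (h : ∀ b, {x ∈ s | f x = b}.encard ≤ (A b).encard) :
    ∃ g : α → γ, (∀ x ∈ s, g x ∈ A (f x)) ∧
      ∀ x ∈ s, ∀ y ∈ s, f x = f y → g x = g y → x = y := by
  choose g hg using fun b => (Set.toFinite {x ∈ s | f x = b}).exists_injOn_of_encard_le (h b)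
  refine ⟨fun x => g (f x) x, fun x hx => (hg (f x)).1 ⟨hx, rfl⟩,
    fun x hx y hy hxy hgxy => ?_⟩
  simp only [hxy] at hgxy
  exact (hg (f x)).2 ⟨hx, rfl⟩ ⟨hy, hxy.symm⟩ (by rwa [hxy])

lemma _root_.SimpleGraph.Reachable.mem_of_forall_adj_mem {V : Type*} {G : SimpleGraph V}
    {T : Set V} (hT : ∀ x ∈ T, ∀ y, G.Adj x y → y ∈ T) {u v : V} (h : G.Reachable u v)
    (hu : u ∈ T) : v ∈ T := by
  obtain ⟨w⟩ := h
  induction w with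
  | nil => exact hu
  | cons huv _ ih => exact ih (hT _ hu _ huv)

lemma _root_.SimpleGraph.IsAcyclic.eq_add_one_of_adj_getVert {V : Type*} {G : SimpleGraph V}
    (hG : G.IsAcyclic) {a b : V} {p : G.Walk a b} (hp : p.IsPath) {i j : ℕ} (hij : i < j)
    (hj : j ≤ p.length) (h : G.Adj (p.getVert i) (p.getVert j)) : j = i + 1 := by
  have hmem : p.getVert j ∈ (p.drop i).support := by
    rw [← Nat.add_sub_cancel' hij.le, ← p.drop_getVert]
    exact Walk.getVert_mem_support _ _
  have hsnd := hG.eq_snd_of_adj_start (hp.drop i) h hmem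
  rw [Walk.snd, Walk.drop_getVert] at hsnd
  exact hp.getVert_injOn (show j ≤ p.length from hj) (show i + 1 ≤ p.length by omega) hsnd

lemma _root_.SimpleGraph.IsAcyclic.eq_add_one_or_eq_add_one_of_adj_getVert {V : Type*}
    {G : SimpleGraph V} (hG : G.IsAcyclic) {a b : V} {p : G.Walk a b} (hp : p.IsPath)
    {i j : ℕ} (hi : i ≤ p.length) (hj : j ≤ p.length)
    (h : G.Adj (p.getVert i) (p.getVert j)) : j = i + 1 ∨ i = j + 1 := by
  rcases lt_trichotomy i j with hij | rfl | hij
  · exact .inl (hG.eq_add_one_of_adj_getVert hp hij hj h)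
  · exact absurd h (G.irrefl)
  · exact .inr (hG.eq_add_one_of_adj_getVert hp hij hi h.symm)

lemma neighborSet_eq_singleton_of_deg_eq_one {V : Type*} {G : SimpleGraph V} {u w : V}
    (h : deg G u = 1) (huw : G.Adj u w) : G.neighborSet u = {w} := by
  obtain ⟨x, hx⟩ := Set.ncard_eq_one.mp h
  have hwx : w = x := by simpa [hx] using (show w ∈ G.neighborSet u from huw)
  rw [hx, hwx]

section Spine

variable {V : Type*} [Finite V] {G : SimpleGraph V} {a b : V} {p : G.Walk a b}
  (hG : G.Connected) (hsupp : ∀ v, 2 ≤ deg G v ↔ v ∈ p.support)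
include hG hsupp

lemma deg_eq_one_of_notMem_support {v : V} (hv : v ∉ p.support) : deg G v = 1 := by
  have hne : (G.neighborSet v).Nonempty := (hG.preconnected v a).nonempty_neighborSet_left
    (by rintro rfl; exact hv p.start_mem_support)
  have hpos := (Set.ncard_pos (Set.toFinite _)).2 hne
  have hlt := (hsupp v).not.2 hv
  unfold deg at hlt ⊢
  omega

lemma mem_support_of_adj_of_notMem_support {u w : V} (hu : u ∉ p.support) (huw : G.Adj u w) :
    w ∈ p.support := by
  by_contra hw
  have hNu := neighborSet_eq_singleton_of_deg_eq_one
    (deg_eq_one_of_notMem_support hG hsupp hu) huw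
  have hNw := neighborSet_eq_singleton_of_deg_eq_one
    (deg_eq_one_of_notMem_support hG hsupp hw) huw.symm
  have hclosed : ∀ x ∈ ({u, w} : Set V), ∀ y, G.Adj x y → y ∈ ({u, w} : Set V) := by
    rintro x (rfl | rfl) y hxy
    · exact .inr (by simpa [hNu] using (show y ∈ G.neighborSet x from hxy))
    · exact .inl (by simpa [hNw] using (show y ∈ G.neighborSet x from hxy))
  rcases (hG.preconnected u a).mem_of_forall_adj_mem hclosed (.inl rfl) with h | h
  · exact hu (h ▸ p.start_mem_support)
  · exact hw (h ▸ p.start_mem_support)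

lemma exists_spine_index : ∃ pos : V → ℕ, ∀ v, pos v ≤ p.length ∧
    (v ∈ p.support → p.getVert (pos v) = v) ∧
    (v ∉ p.support → G.Adj v (p.getVert (pos v))) := by
  have (v : V) : ∃ i ≤ p.length, (v ∈ p.support → p.getVert i = v) ∧
      (v ∉ p.support → G.Adj v (p.getVert i)) := by
    by_cases hv : v ∈ p.support
    · obtain ⟨i, hi, hle⟩ := Walk.mem_support_iff_exists_getVert.mp hv
      exact ⟨i, hle, fun _ => hi, fun h => absurd hv h⟩
    · obtain ⟨w, hw⟩ := Set.ncard_eq_one.mp (deg_eq_one_of_notMem_support hG hsupp hv)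
      have hvw : G.Adj v w := show w ∈ G.neighborSet v by simp [hw]
      obtain ⟨i, hi, hle⟩ := Walk.mem_support_iff_exists_getVert.mp
        (mem_support_of_adj_of_notMem_support hG hsupp hv hvw)
      exact ⟨i, hle, fun h => absurd h hv, fun _ => hi ▸ hvw⟩
  choose pos hle hpos using this
  exact ⟨pos, fun v => ⟨hle v, hpos v⟩⟩

end Spine

/-- Each direction forbidden at the `i`-th spine vertex is used by a spine edge there. -/
lemma ncard_compl_allowedDirs_le {V : Type*} {G : SimpleGraph V} {a b : V} {p : G.Walk a b}
    (hp : p.IsPath) {i : ℕ} (hi : i ≤ p.length) :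
    (allowedDirs p.length i)ᶜ.ncard ≤
      (G.neighborSet (p.getVert i) ∩ {v | v ∈ p.support}).ncard := by
  refine Set.ncard_le_ncard_of_injOn (fun d => p.getVert (if d = .left then i - 1 else i + 1))
    (fun d hd => ?_) (fun d hd d' hd' h => ?_) ((List.finite_toSet p.support).inter_of_right _)
  · rcases notMem_allowedDirs.mp hd with ⟨rfl, hi0⟩ | ⟨rfl, hin⟩
    · have hadj := p.adj_getVert_succ (i := i - 1) (by omega)
      rw [Nat.sub_add_cancel (Nat.pos_of_ne_zero hi0)] at hadj
      exact ⟨by simpa using hadj.symm, Walk.getVert_mem_support _ _⟩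
    · exact ⟨by simpa using p.adj_getVert_succ (i := i) (by omega),
        Walk.getVert_mem_support _ _⟩
  · rcases notMem_allowedDirs.mp hd with ⟨rfl, hi0⟩ | ⟨rfl, hin⟩ <;>
      rcases notMem_allowedDirs.mp hd' with ⟨rfl, hi0'⟩ | ⟨rfl, hin'⟩
    · rfl
    · have := hp.getVert_injOn (show i - 1 ≤ p.length by omega)
        (show i + 1 ≤ p.length by omega) (by simpa using h)
      omega
    · have := hp.getVert_injOn (show i - 1 ≤ p.length by omega)
        (show i + 1 ≤ p.length by omega) (by simpa using h.symm)
      omega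
    · rfl

lemma ncard_leaves_le {V : Type*} [Finite V] {G : SimpleGraph V} {a b : V}
    {p : G.Walk a b} (hp : p.IsPath) (hdeg : ∀ v ∈ p.support, deg G v ≤ 4) {pos : V → ℕ}
    (hle : ∀ v, pos v ≤ p.length) (hadj : ∀ v ∉ p.support, G.Adj v (p.getVert (pos v)))
    (i : ℕ) :
    {ℓ | ℓ ∉ p.support ∧ pos ℓ = i}.ncard ≤ (allowedDirs p.length i).ncard := by
  by_cases hi : i ≤ p.length
  · have hsub : {ℓ | ℓ ∉ p.support ∧ pos ℓ = i} ⊆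
        G.neighborSet (p.getVert i) \ {v | v ∈ p.support} :=
      fun ℓ ⟨hℓ, hℓi⟩ => ⟨(hℓi ▸ hadj ℓ hℓ).symm, hℓ⟩
    have hleaves := Set.ncard_le_ncard hsub
    have hsplit := Set.ncard_inter_add_ncard_sdiff_eq_ncard (G.neighborSet (p.getVert i))
      {v | v ∈ p.support}
    have hspine := ncard_compl_allowedDirs_le hp hi
    have hdirs := Set.ncard_add_ncard_compl (allowedDirs p.length i)
    have hdeg4 := hdeg _ (Walk.getVert_mem_support _ _ : p.getVert i ∈ p.support)
    rw [Dir.natCard_eq_four] at hdirs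
    unfold deg at hdeg4
    omega
  · have hempty : {ℓ | ℓ ∉ p.support ∧ pos ℓ = i} = ∅ :=
      Set.eq_empty_of_forall_notMem fun ℓ ⟨_, hℓi⟩ => hi (hℓi ▸ hle ℓ)
    simp [hempty]

theorem IsKCaterpillar.exists_isCaterpillarLayout {V : Type*} [Finite V] {G : SimpleGraph V}
    (hcat : IsKCaterpillar 4 G) : ∃ n S pos dir, IsCaterpillarLayout G n S pos dir := by
  obtain ⟨hT, -, ⟨a, b, p, hp, hsupp⟩, hdeg⟩ := hcat
  have hG := hT.connected
  obtain ⟨pos, hpos⟩ := exists_spine_index hG hsupp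
  have hcount (i : ℕ) : {ℓ | ℓ ∉ p.support ∧ pos ℓ = i}.encard ≤
      (allowedDirs p.length i).encard := by
    rw [← (Set.toFinite _).cast_ncard_eq, ← (Set.toFinite _).cast_ncard_eq, Nat.cast_le]
    exact ncard_leaves_le hp (fun v hv => (hdeg v ((hsupp v).2 hv)).2) (fun v => (hpos v).1)
      (fun v hv => (hpos v).2.2 hv) i
  have : Nonempty Dir := ⟨.up⟩
  obtain ⟨dir, hdir, hdir_inj⟩ :=
    exists_injOn_fibers {v | v ∈ p.support}ᶜ pos (allowedDirs p.length) hcount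
  have hvert {v : V} (hv : v ∈ p.support) : p.getVert (pos v) = v := (hpos v).2.1 hv
  refine ⟨p.length, {v | v ∈ p.support}, pos, dir,
    { deg_ne_one := fun v hv => by have := (hsupp v).2 hv; omega
      deg_eq_one := fun v hv => deg_eq_one_of_notMem_support hG hsupp hv
      mem_of_adj_of_notMem := fun u hu v huv =>
        mem_support_of_adj_of_notMem_support hG hsupp hu huv
      pos_le := fun v => (hpos v).1
      pos_injOn := fun u hu v hv h => by rw [← hvert hu, ← hvert hv, h]
      pos_of_adj := fun u hu v hv huv => ?_
      pos_of_adj_leaf := fun u hu v hv huv => ?_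
      dir_mem := hdir
      dir_injOn := hdir_inj }⟩
  · rw [← hvert hu, ← hvert hv] at huv
    exact hT.isAcyclic.eq_add_one_or_eq_add_one_of_adj_getVert hp (hpos u).1 (hpos v).1 huv
  · have hN := neighborSet_eq_singleton_of_deg_eq_one
      (deg_eq_one_of_notMem_support hG hsupp hv) huv.symm
    have hvu : p.getVert (pos v) = p.getVert (pos u) := by
      rw [hvert hu]
      simpa [hN] using (show p.getVert (pos v) ∈ G.neighborSet v from (hpos v).2.2 hv)
    exact hp.getVert_injOn (hpos v).1 (hpos u).1 hvu

/-- Every 4-caterpillar admits a convex rectilinear planar drawing. -/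
theorem stmt4 {V : Type*} [Fintype V] (G : SimpleGraph V)
    (hcat : IsKCaterpillar 4 G) :
    HasConvexDrawing G := by
  obtain ⟨n, S, pos, dir, hL⟩ := hcat.exists_isCaterpillarLayout
  exact ⟨_, hL.isConvexRectDrawing⟩

end TurnRegular
end
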